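/- Let ℓ₂ = ℓ²(ℕ, ℝ) and for nonzero x ∈ ℓ₂ define coordinatewise Ω₁(x)_j = 2·x_j·log(|x_j|/‖x‖₂) and Ω₂(x)_j = 2·x_j·log²(|x_j|/‖x‖₂) (with j-th entry 0 whenever x_j = 0), where log is the natural logarithm. For sequences y, x set ‖(y,x)‖_{Ω_{1,1}} = ‖y − Ω₁(x)‖₂ + ‖x‖₂ and for triples set ‖(w,y,x)‖_{Ω_{1,2}} = ‖(w − Ω₂(x), y − Ω₁(x))‖_{Ω_{1,1}} + ‖x‖₂ (each understood as +∞ unless the relevant differences lie in ℓ₂). Then for every n ≥ 1 and every choice of signs ε₁,…,ε_n ∈ {−1, 1}, the vector x = Σ_{i=1}^n ε_i e_i (where e_i are the unit coordinate vectors) satisfies ‖(0,0,x)‖_{Ω_{1,2}} = √n·(1 + log n + (1/2)·log² n). -/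

import Mathlib

noncomputable section

/-- The `ℓ₂`-norm of a real sequence, `‖f‖₂ = (∑ f_j²)^{1/2}` (the `tsum` gives the
correct value for the finitely supported sequences appearing below). -/
def norm2 (f : ℕ → ℝ) : ℝ := Real.sqrt (∑' j, f j ^ 2)

/-- The Kalton–Peck map `Ω₁(x)_j = 2 x_j log(|x_j|/‖x‖₂)` (the `j`-th entry vanishes
whenever `x_j = 0`, since it is a multiple of `x_j`). -/
def Om1 (x : ℕ → ℝ) : ℕ → ℝ := fun j => 2 * x j * Real.log (|x j| / norm2 x)

/-- The second-order Kalton–Peck map `Ω₂(x)_j = 2 x_j log²(|x_j|/‖x‖₂)`. -/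
def Om2 (x : ℕ → ℝ) : ℕ → ℝ := fun j => 2 * x j * Real.log (|x j| / norm2 x) ^ 2

/-- The quasinorm of the twisted sum `ℓ₂ ⊕_{Ω₁} ℓ₂` (the Kalton–Peck space `Z₂`):
`‖(y,x)‖ = ‖y − Ω₁(x)‖₂ + ‖x‖₂`. -/
def qnorm11 (y x : ℕ → ℝ) : ℝ := norm2 (y - Om1 x) + norm2 x

/-- The quasinorm of the twisted sum space `𝒵^(3)`:
`‖(w,y,x)‖ = ‖(w − Ω₂(x), y − Ω₁(x))‖_{Ω₁,₁} + ‖x‖₂`. -/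
def qnorm12 (w y x : ℕ → ℝ) : ℝ := qnorm11 (w - Om2 x) (y - Om1 x) + norm2 x

/-!
On the support of `x = ∑ εᵢ eᵢ` every entry has modulus one, so `Ω₁` and `Ω₂` act on `x` as
multiplication by the scalars `a = -log n` and `b = ½ log² n`. Since `Ω₁` is homogeneous,
`Ω₁(Ω₁ x) = a² x`, hence `‖(0,0,x)‖_{Ω₁,₂} = (|a² − b| + |a| + 1) ‖x‖₂`, and `‖x‖₂ = √n`.
-/

open Real

lemma norm2_smul (c : ℝ) (f : ℕ → ℝ) : norm2 (c • f) = |c| * norm2 f := by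
  simp only [norm2, Pi.smul_apply, smul_eq_mul, mul_pow, tsum_mul_left]
  rw [sqrt_mul' _ (tsum_nonneg fun j => sq_nonneg (f j)), sqrt_sq_eq_abs]

lemma Om1_smul (c : ℝ) (x : ℕ → ℝ) : Om1 (c • x) = c • Om1 x := by
  rcases eq_or_ne c 0 with rfl | hc
  · ext j; simp [Om1]
  ext j
  have hratio : |c * x j| / (|c| * norm2 x) = |x j| / norm2 x := by
    rw [abs_mul, mul_div_mul_left _ _ (abs_ne_zero.2 hc)]
  simp only [Om1, Pi.smul_apply, smul_eq_mul, norm2_smul, hratio]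
  ring

section Flat

variable {x : ℕ → ℝ} {a : ℝ}

lemma Om1_eq_smul_of_abs_eq (h : ∀ j, x j ≠ 0 → |x j| = a) :
    Om1 x = (2 * log (a / norm2 x)) • x := by
  ext j
  rcases eq_or_ne (x j) 0 with hj | hj
  · simp [Om1, hj]
  · simp only [Om1, Pi.smul_apply, smul_eq_mul, h j hj]
    ring

lemma Om2_eq_smul_of_abs_eq (h : ∀ j, x j ≠ 0 → |x j| = a) :
    Om2 x = (2 * log (a / norm2 x) ^ 2) • x := by
  ext j
  rcases eq_or_ne (x j) 0 with hj | hj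
  · simp [Om2, hj]
  · simp only [Om2, Pi.smul_apply, smul_eq_mul, h j hj]
    ring

end Flat

lemma qnorm12_zero_zero_of_eq_smul {x : ℕ → ℝ} {a b : ℝ} (ha : Om1 x = a • x)
    (hb : Om2 x = b • x) : qnorm12 0 0 x = (|a ^ 2 - b| + |a| + 1) * norm2 x := by
  have hfirst : (0 : ℕ → ℝ) - Om1 x = (-a) • x := by rw [ha, zero_sub, neg_smul]
  have hsecond : (0 : ℕ → ℝ) - Om2 x - Om1 ((-a) • x) = (a ^ 2 - b) • x := by
    rw [Om1_smul, ha, hb, smul_smul, zero_sub, ← neg_smul, ← sub_smul]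
    ring_nf
  rw [qnorm12, qnorm11, hfirst, hsecond, norm2_smul, norm2_smul, abs_neg]
  ring

section SignVector

variable {n : ℕ}

lemma sum_smul_single_apply (ε : Fin n → ℝ) (j : ℕ) :
    (∑ i : Fin n, ε i • (Pi.single (i : ℕ) (1 : ℝ) : ℕ → ℝ)) j =
      if h : j < n then ε ⟨j, h⟩ else 0 := by
  simp only [Finset.sum_apply, Pi.smul_apply, Pi.single_apply, smul_eq_mul, mul_ite, mul_one,
    mul_zero]
  split_ifs with h
  · have hj : ∀ i : Fin n, j = i ↔ (⟨j, h⟩ : Fin n) = i := fun i => by simp [Fin.ext_iff]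
    simp only [hj, Finset.sum_ite_eq, Finset.mem_univ, if_true]
  · exact Finset.sum_eq_zero fun i _ => if_neg fun hij : j = i => h (hij ▸ i.isLt)

lemma norm2_sum_smul_single (ε : Fin n → ℝ) :
    norm2 (∑ i : Fin n, ε i • (Pi.single (i : ℕ) (1 : ℝ) : ℕ → ℝ)) = √(∑ i, ε i ^ 2) := by
  simp only [norm2, sum_smul_single_apply]
  rw [tsum_eq_sum (s := Finset.range n) fun j hj => by simp_all, ← Fin.sum_univ_eq_sum_range]
  simp

lemma abs_sum_smul_single_of_sign {ε : Fin n → ℝ} (hε : ∀ i, ε i = 1 ∨ ε i = -1) (j : ℕ)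
    (hj : (∑ i : Fin n, ε i • (Pi.single (i : ℕ) (1 : ℝ) : ℕ → ℝ)) j ≠ 0) :
    |(∑ i : Fin n, ε i • (Pi.single (i : ℕ) (1 : ℝ) : ℕ → ℝ)) j| = 1 := by
  rw [sum_smul_single_apply] at hj ⊢
  split_ifs at hj ⊢ with h
  · rcases hε ⟨j, h⟩ with h1 | h1 <;> simp [h1]
  · exact absurd rfl hj

end SignVector

theorem qnorm12_sum_signs_general (n : ℕ) (ε : Fin n → ℝ)
    (hε : ∀ i, ε i = 1 ∨ ε i = -1) :
    qnorm12 0 0 (∑ i : Fin n, ε i • (Pi.single (i : ℕ) (1 : ℝ) : ℕ → ℝ)) =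
      Real.sqrt n * (1 + Real.log n + (1 / 2) * Real.log n ^ 2) := by
  set x := ∑ i : Fin n, ε i • (Pi.single (i : ℕ) (1 : ℝ) : ℕ → ℝ)
  have hnorm : norm2 x = √n := by
    have hsq : ∀ i, ε i ^ 2 = 1 := fun i => by rcases hε i with h | h <;> simp [h]
    simp [x, norm2_sum_smul_single, hsq]
  have hflat := abs_sum_smul_single_of_sign hε
  have hlog : log (1 / √n) = -(1 / 2) * log n := by
    rw [one_div, log_inv, log_sqrt n.cast_nonneg]
    ring
  rw [qnorm12_zero_zero_of_eq_smul (Om1_eq_smul_of_abs_eq hflat) (Om2_eq_smul_of_abs_eq hflat),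
    hnorm, hlog]
  have hL := log_natCast_nonneg n
  rw [abs_of_nonneg (by nlinarith), abs_of_nonpos (by nlinarith)]
  ring

/-- **Cotype-2 estimate witness in `𝒵^(3)`.**
For every `n ≥ 1` and every choice of signs `ε₁,…,ε_n ∈ {−1,1}`, the vector
`x = ∑ ε_i e_i` satisfies `‖(0,0,x)‖_{Ω₁,₂} = √n (1 + log n + ½ log² n)`. -/
theorem qnorm12_sum_signs (n : ℕ) (hn : 1 ≤ n) (ε : Fin n → ℝ)
    (hε : ∀ i, ε i = 1 ∨ ε i = -1) :
    qnorm12 0 0 (∑ i : Fin n, ε i • (Pi.single (i : ℕ) (1 : ℝ) : ℕ → ℝ)) =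
      Real.sqrt n * (1 + Real.log n + (1 / 2) * Real.log n ^ 2) :=
  qnorm12_sum_signs_general n ε hε

end
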